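/- For all finite families x₁, …, x_l ∈ ℝᵐ, y₁, …, y_l, y ∈ ℝⁿ, and weights λ₁, …, λ_l ≥ 0 with Σᵢ λᵢ = 1, setting Φ(x, y, y') = ‖x‖² + 2⟨x, y − y'⟩ and x̄ = Σⱼ λⱼxⱼ, one has the equality Σ_{i,j} λᵢλⱼ Φ(xᵢ − xⱼ, yᵢ, yⱼ) = 2 Σᵢ λᵢ Φ(xᵢ − x̄, yᵢ, y). In particular, Φ : ℝᵐ × ℝⁿ × ℝⁿ → ℝ defined by Φ(x, y, y') = ‖x‖² + 2⟨x, y − y'⟩ is a K-function. -/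

import Mathlib

/-!
With `zᵢ = xᵢ + 2yᵢ` one has `Φ(xᵢ - xⱼ, yᵢ, yⱼ) = ⟪xᵢ - xⱼ, zᵢ - zⱼ⟫` and
`Φ(xᵢ - x̄, yᵢ, y) = ⟪xᵢ - x̄, zᵢ - (x̄ + 2y)⟫`, so the identity is an instance of the weighted
bilinear identity `∑ᵢⱼ λᵢλⱼ⟪xᵢ - xⱼ, zᵢ - zⱼ⟫ = 2 ∑ᵢ λᵢ⟪xᵢ - x̄, zᵢ - w⟫`, valid for every `w`
because both sides equal `2 (∑ᵢ λᵢ⟪xᵢ, zᵢ⟫ - ⟪x̄, z̄⟫)`. Equality gives the averaging inequality of a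
`K`-function, and `x ↦ ‖x‖² + 2⟪x, v⟫` is continuous and convex.
-/

open scoped RealInnerProductSpace

/-- A `K`-function in the sense of Minty (all three variables in `ℝᵐ`):
lower semicontinuous and convex in the first variable, and satisfying the
averaging inequality. -/
def IsKFunction (m : ℕ)
    (Φ : EuclideanSpace ℝ (Fin m) → EuclideanSpace ℝ (Fin m) → EuclideanSpace ℝ (Fin m) → ℝ) :
    Prop :=
  (∀ y y' : EuclideanSpace ℝ (Fin m),
      LowerSemicontinuous (fun x => Φ x y y') ∧
      ConvexOn ℝ Set.univ (fun x => Φ x y y')) ∧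
  (∀ (l : ℕ) (x : Fin l → EuclideanSpace ℝ (Fin m))
      (yv : Fin l → EuclideanSpace ℝ (Fin m)) (lam : Fin l → ℝ),
    (∀ i, 0 ≤ lam i) → (∑ i, lam i = 1) →
    ∀ y : EuclideanSpace ℝ (Fin m),
      ∑ i, ∑ j, lam i * lam j * Φ (x i - x j) (yv i) (yv j) ≥
        2 * ∑ i, lam i * Φ (x i - ∑ j, lam j • x j) (yv i) y)

section WeightedSums

variable {ι E : Type*} [Fintype ι] [NormedAddCommGroup E] [InnerProductSpace ℝ E]

lemma sum_mul_inner_left (lam : ι → ℝ) (x : ι → E) (w : E) :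
    ∑ i, lam i * ⟪x i, w⟫ = ⟪∑ i, lam i • x i, w⟫ := by
  simp only [sum_inner, real_inner_smul_left]

lemma sum_mul_inner_right (lam : ι → ℝ) (a : E) (z : ι → E) :
    ∑ i, lam i * ⟪a, z i⟫ = ⟪a, ∑ i, lam i • z i⟫ := by
  simp only [inner_sum, real_inner_smul_right]

lemma sum_mul_inner_sub_sub {lam : ι → ℝ} (hlam : ∑ i, lam i = 1) (x z : ι → E) (a w : E) :
    ∑ i, lam i * ⟪x i - a, z i - w⟫ =
      ∑ i, lam i * ⟪x i, z i⟫ - ⟪a, ∑ i, lam i • z i⟫ - ⟪∑ i, lam i • x i, w⟫ + ⟪a, w⟫ := by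
  have hconst : ∑ i, lam i * ⟪a, w⟫ = ⟪a, w⟫ := by rw [← Finset.sum_mul, hlam, one_mul]
  simp only [inner_sub_left, inner_sub_right, mul_sub, Finset.sum_sub_distrib,
    sum_mul_inner_left, sum_mul_inner_right, hconst]
  ring

lemma sum_sum_mul_inner_sub_sub {lam : ι → ℝ} (hlam : ∑ i, lam i = 1) (x z : ι → E) (w : E) :
    ∑ i, ∑ j, lam i * lam j * ⟪x i - x j, z i - z j⟫ =
      2 * ∑ i, lam i * ⟪x i - ∑ j, lam j • x j, z i - w⟫ := by
  have hinner : ∀ i, ∑ j, lam i * lam j * ⟪x i - x j, z i - z j⟫ =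
      lam i * ∑ j, lam j * ⟪x j - x i, z j - z i⟫ := fun i => by
    rw [Finset.mul_sum]
    refine Finset.sum_congr rfl fun j _ => ?_
    rw [← neg_sub (x j), ← neg_sub (z j), inner_neg_neg, mul_assoc]
  simp only [hinner, sum_mul_inner_sub_sub hlam, mul_sub, mul_add, Finset.sum_add_distrib,
    Finset.sum_sub_distrib, sum_mul_inner_left, sum_mul_inner_right]
  rw [← Finset.sum_mul, hlam, one_mul]
  ring

lemma norm_sub_sq_add_two_mul_inner (u u' a b : E) :
    ‖u - u'‖ ^ 2 + 2 * ⟪u - u', a - b⟫ = ⟪u - u', (u + (2 : ℝ) • a) - (u' + (2 : ℝ) • b)⟫ := by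
  rw [← real_inner_self_eq_norm_sq, add_sub_add_comm, ← smul_sub, inner_add_right,
    real_inner_smul_right]

lemma sum_sum_mul_norm_sq_add_inner {lam : ι → ℝ} (hlam : ∑ i, lam i = 1) (x y : ι → E) (w : E) :
    ∑ i, ∑ j, lam i * lam j * (‖x i - x j‖ ^ 2 + 2 * ⟪x i - x j, y i - y j⟫) =
      2 * ∑ i, lam i *
        (‖x i - ∑ j, lam j • x j‖ ^ 2 + 2 * ⟪x i - ∑ j, lam j • x j, y i - w⟫) := by
  simp only [norm_sub_sq_add_two_mul_inner]
  exact sum_sum_mul_inner_sub_sub hlam x _ _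

lemma convexOn_univ_norm_sq_add_inner (v : E) :
    ConvexOn ℝ Set.univ fun x : E => ‖x‖ ^ 2 + 2 * ⟪x, v⟫ := by
  have hsq : ConvexOn ℝ Set.univ fun x : E => ‖x‖ ^ 2 :=
    (convexOn_norm convex_univ).pow (fun x _ => norm_nonneg x) 2
  have hlin : ConvexOn ℝ Set.univ fun x : E => 2 * ⟪x, v⟫ := by
    refine ⟨convex_univ, fun p _ q _ a b _ _ _ => le_of_eq ?_⟩
    simp only [inner_add_left, real_inner_smul_left, smul_eq_mul]
    ring
  exact hsq.add hlin

end WeightedSums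

theorem stmt_15 (m : ℕ)
    (Φ : EuclideanSpace ℝ (Fin m) → EuclideanSpace ℝ (Fin m) → EuclideanSpace ℝ (Fin m) → ℝ)
    (hΦ : ∀ x y y', Φ x y y' = ‖x‖ ^ 2 + 2 * ⟪x, y - y'⟫) :
    (∀ (l : ℕ) (x : Fin l → EuclideanSpace ℝ (Fin m))
        (yv : Fin l → EuclideanSpace ℝ (Fin m)) (lam : Fin l → ℝ),
      (∀ i, 0 ≤ lam i) → (∑ i, lam i = 1) →
      ∀ y : EuclideanSpace ℝ (Fin m),
        ∑ i, ∑ j, lam i * lam j * Φ (x i - x j) (yv i) (yv j) =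
          2 * ∑ i, lam i * Φ (x i - ∑ j, lam j • x j) (yv i) y) ∧
    IsKFunction m Φ := by
  refine ⟨fun l x yv lam _ hlam y => ?_, fun y y' => ⟨?_, ?_⟩, fun l x yv lam _ hlam y => ?_⟩
  · simpa only [hΦ] using sum_sum_mul_norm_sq_add_inner hlam x yv y
  · simp only [hΦ]
    exact Continuous.lowerSemicontinuous (by fun_prop)
  · simpa only [hΦ] using convexOn_univ_norm_sq_add_inner (y - y')
  · simpa only [hΦ] using (sum_sum_mul_norm_sq_add_inner hlam x yv y).ge
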